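/- Let F be a free group with free basis Y where |Y| > 1, and let y1, y2 be nontrivial elements of F. Then there exists v in F such that for every nonzero integer m, the commutator [v^m y1 v^{-m}, y2] is nontrivial. -/

import Mathlib

/-!
Subgroups of free groups are free (Nielsen–Schreier), an abelian free group is cyclic, and a
non-cyclic free group maps onto `ℤ²`. Hence commuting elements of a free group are powers of a
common element, while for non-commuting `u, w` the group `⟨u, w⟩` maps onto `ℤ²` with `u, w`
going to a generating pair, which excludes the relations `u ^ m = w ^ n` (`m ≠ 0`) and
`w u^p w⁻¹ = u^q` (`p ≠ q`). So commutation is transitive on nontrivial elements, and `c`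
commutes with `x` as soon as `c x c⁻¹` does.

If `y1, y2` do not commute, `v = 1` works. Otherwise both are powers of some `z ≠ 1`, and as the
centre is trivial some `v` does not commute with `z`. If `g = v^m` conjugated `y1` into the
centralizer of `y2`, transitivity would make `g z g⁻¹` commute with `z`, hence `g` commute with
`z`, hence, as `g ≠ 1` by torsion-freeness, `v` commute with `z`.
-/

open scoped commutatorElement

theorem eq_zero_of_zpow_eq_zpow_of_closure_pair_eq_top {A B : Multiplicative (ℤ × ℤ)}
    (hAB : Subgroup.closure {A, B} = ⊤) {m n : ℤ} (h : A ^ m = B ^ n) : m = 0 := by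
  have hpow : ∀ x, x ^ m ∈ Subgroup.zpowers B := by
    have : Subgroup.closure {A, B} ≤ (Subgroup.zpowers B).comap (zpowGroupHom m) := by
      rw [Subgroup.closure_le]
      rintro x (rfl | rfl)
      · exact ⟨n, h.symm⟩
      · exact ⟨m, rfl⟩
    exact fun x => this (hAB ▸ Subgroup.mem_top x)
  obtain ⟨k, hk⟩ := hpow (.ofAdd (1, 0))
  obtain ⟨l, hl⟩ := hpow (.ofAdd (0, 1))
  obtain ⟨hk₁, hk₂⟩ := Prod.ext_iff.1 (congrArg Multiplicative.toAdd hk)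
  obtain ⟨-, hl₂⟩ := Prod.ext_iff.1 (congrArg Multiplicative.toAdd hl)
  simp only [toAdd_zpow, toAdd_ofAdd, Prod.smul_fst, Prod.smul_snd, smul_eq_mul, mul_one,
    mul_zero] at hk₁ hk₂ hl₂
  rcases mul_eq_zero.1 hk₂ with rfl | hB
  · simpa using hk₁.symm
  · simpa [hB] using hl₂.symm

theorem FreeGroup.not_commute_of_ne {α : Type*} {a b : α} (hab : a ≠ b) :
    ¬Commute (of a) (of b) := by
  classical
  intro h
  have := h.map
    (lift fun x => if x = a then (Equiv.swap 0 1 : Equiv.Perm (Fin 3)) else .swap 1 2)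
  simp only [lift_apply_of, if_pos, if_neg hab.symm, Commute, SemiconjBy] at this
  revert this
  decide

namespace IsFreeGroup

variable {G : Type*} [Group G] [IsFreeGroup G]

theorem isCyclic_of_subsingleton_generators [Subsingleton (Generators G)] : IsCyclic G := by
  suffices IsCyclic (FreeGroup (Generators G)) from
    isCyclic_of_surjective (toFreeGroup G).symm (toFreeGroup G).symm.surjective
  obtain _ | ⟨⟨a⟩⟩ := isEmpty_or_nonempty (Generators G)
  · infer_instance
  · have := uniqueOfSubsingleton a
    infer_instance

theorem isCyclic_of_isMulCommutative [IsMulCommutative G] : IsCyclic G := by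
  have : Subsingleton (Generators G) := by
    refine ⟨fun a b => by_contra fun hab => FreeGroup.not_commute_of_ne hab ?_⟩
    simpa using Commute.map
      (mul_comm' ((toFreeGroup G).symm (.of a)) ((toFreeGroup G).symm (.of b))) (toFreeGroup G)
  exact isCyclic_of_subsingleton_generators

theorem isCyclic_or_exists_surjective :
    IsCyclic G ∨ ∃ f : G →* Multiplicative (ℤ × ℤ), Function.Surjective f := by
  classical
  rcases subsingleton_or_nontrivial (Generators G) with _ | _
  · exact .inl isCyclic_of_subsingleton_generators
  · obtain ⟨a, b, hab⟩ := exists_pair_ne (Generators G)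
    refine .inr ⟨lift fun x =>
      if x = a then .ofAdd (1, 0) else if x = b then .ofAdd (0, 1) else 1,
      fun x => ⟨of a ^ x.toAdd.1 * of b ^ x.toAdd.2, ?_⟩⟩
    apply Multiplicative.toAdd.injective
    ext <;> simp [hab.symm]

theorem exists_hom_closure_pair_eq_top_of_not_commute {u w : G} (h : ¬Commute u w) :
    ∃ f : Subgroup.closure ({u, w} : Set G) →* Multiplicative (ℤ × ℤ),
      Subgroup.closure {f ⟨u, Subgroup.subset_closure (.inl rfl)⟩,
        f ⟨w, Subgroup.subset_closure (.inr rfl)⟩} = ⊤ := by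
  rcases isCyclic_or_exists_surjective (G := Subgroup.closure ({u, w} : Set G)) with _ | ⟨f, hf⟩
  · exact absurd (congrArg Subtype.val (mul_comm' (⟨u, Subgroup.subset_closure (.inl rfl)⟩ :
      Subgroup.closure ({u, w} : Set G)) ⟨w, Subgroup.subset_closure (.inr rfl)⟩)) h
  · refine ⟨f, ?_⟩
    rw [← Set.image_pair, ← MonoidHom.map_closure, ← Subgroup.map_top_of_surjective f hf,
      ← Subgroup.closure_closure_coe_preimage (k := {u, w})]
    congr 2
    ext ⟨x, _⟩
    simp

theorem commute_of_zpow_eq_zpow {u w : G} {m n : ℤ} (hm : m ≠ 0) (h : u ^ m = w ^ n) :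
    Commute u w := by
  by_contra hc
  obtain ⟨f, hf⟩ := exists_hom_closure_pair_eq_top_of_not_commute hc
  refine hm (eq_zero_of_zpow_eq_zpow_of_closure_pair_eq_top hf (n := n) ?_)
  rw [← map_zpow, ← map_zpow]
  exact congrArg f (Subtype.ext (by simpa using h))

theorem commute_of_mul_zpow_mul_inv_eq_zpow {u c : G} {p q : ℤ} (hpq : p ≠ q)
    (h : c * u ^ p * c⁻¹ = u ^ q) : Commute u c := by
  by_contra hc
  obtain ⟨f, hf⟩ := exists_hom_closure_pair_eq_top_of_not_commute hc
  set U : Subgroup.closure ({u, c} : Set G) := ⟨u, Subgroup.subset_closure (.inl rfl)⟩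
  set C : Subgroup.closure ({u, c} : Set G) := ⟨c, Subgroup.subset_closure (.inr rfl)⟩
  have hrel : f U ^ p = f U ^ q := by
    simpa [mul_inv_cancel_comm] using
      congrArg f (Subtype.ext (by simpa using h) : C * U ^ p * C⁻¹ = U ^ q)
  refine sub_ne_zero.2 hpq (eq_zero_of_zpow_eq_zpow_of_closure_pair_eq_top hf (n := 0) ?_)
  rw [zpow_sub, hrel, mul_inv_cancel, zpow_zero]

theorem exists_zpow_eq_of_commute {x y : G} (h : Commute x y) :
    ∃ (z : G) (p q : ℤ), z ^ p = x ∧ z ^ q = y := by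
  set K := Subgroup.closure ({x, y} : Set G)
  have : IsMulCommutative K := Subgroup.isMulCommutative_closure (by
    rintro a (rfl | rfl) b (rfl | rfl)
    exacts [rfl, h, h.symm, rfl])
  obtain ⟨g, hg⟩ := (isCyclic_of_isMulCommutative (G := K)).exists_generator
  obtain ⟨p, hp⟩ := Subgroup.mem_zpowers_iff.1 (hg ⟨x, Subgroup.subset_closure (.inl rfl)⟩)
  obtain ⟨q, hq⟩ := Subgroup.mem_zpowers_iff.1 (hg ⟨y, Subgroup.subset_closure (.inr rfl)⟩)
  exact ⟨g, p, q, by simpa using congrArg Subtype.val hp,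
    by simpa using congrArg Subtype.val hq⟩

theorem commute_trans {x y z : G} (hy : y ≠ 1) (hxy : Commute x y) (hyz : Commute y z) :
    Commute x z := by
  obtain ⟨u, p, q, rfl, rfl⟩ := exists_zpow_eq_of_commute hxy
  obtain ⟨w, r, s, hwr, rfl⟩ := exists_zpow_eq_of_commute hyz
  have hq : q ≠ 0 := by rintro rfl; simp at hy
  exact (commute_of_zpow_eq_zpow hq hwr.symm).zpow_zpow p s

theorem commute_of_commute_conj {c x : G} (h : Commute (c * x * c⁻¹) x) : Commute c x := by
  obtain ⟨u, p, q, hp, rfl⟩ := exists_zpow_eq_of_commute h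
  rcases eq_or_ne q p with rfl | hqp
  · exact mul_inv_eq_iff_eq_mul.1 hp.symm
  · exact (commute_of_mul_zpow_mul_inv_eq_zpow hqp hp.symm).symm.zpow_right q

end IsFreeGroup

theorem FreeGroup.center_eq_bot {α : Type*} [Nontrivial α] :
    Subgroup.center (FreeGroup α) = ⊥ := by
  refine (Subgroup.eq_bot_iff_forall _).2 fun z hz => by_contra fun hz1 => ?_
  obtain ⟨a, b, hab⟩ := exists_pair_ne α
  exact not_commute_of_ne hab <| IsFreeGroup.commute_trans hz1
    (Subgroup.mem_center_iff.1 hz (of a)) (Subgroup.mem_center_iff.1 hz (of b)).symm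

/-- In a free group of rank > 1, for nontrivial y1, y2 there is v such that
`[v^m y1 v^{-m}, y2]` is nontrivial for every nonzero integer m. -/
theorem stmt0 (Y : Type) [Nontrivial Y] (y1 y2 : FreeGroup Y)
    (h1 : y1 ≠ 1) (h2 : y2 ≠ 1) :
    ∃ v : FreeGroup Y, ∀ m : ℤ, m ≠ 0 → ⁅v ^ m * y1 * v ^ (-m), y2⁆ ≠ 1 := by
  by_cases hc : Commute y1 y2
  swap
  · exact ⟨1, fun m _ => by simpa [commutatorElement_eq_one_iff_commute] using hc⟩
  obtain ⟨z, p, q, rfl, rfl⟩ := IsFreeGroup.exists_zpow_eq_of_commute hc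
  obtain ⟨v, hv⟩ : ∃ v, ¬Commute v z := by
    have : z ∉ Subgroup.center (FreeGroup Y) := by
      rw [FreeGroup.center_eq_bot, Subgroup.mem_bot]
      rintro rfl
      simp at h1
    exact not_forall.1 (mt Subgroup.mem_center_iff.2 this)
  refine ⟨v, fun m hm hcomm => hv ?_⟩
  rw [commutatorElement_eq_one_iff_commute, zpow_neg, ← conj_zpow] at hcomm
  have hvm : v ^ m ≠ 1 := by
    rw [Ne, IsMulTorsionFree.zpow_eq_one_iff_left hm]
    rintro rfl
    exact hv (Commute.one_left z)
  have hconj_ne : (v ^ m * z * (v ^ m)⁻¹) ^ p ≠ 1 := by simpa [conj_zpow] using h1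
  have hconj_pow : Commute ((v ^ m * z * (v ^ m)⁻¹) ^ p) z :=
    IsFreeGroup.commute_trans h2 hcomm (Commute.zpow_self z q)
  have hconj : Commute (v ^ m * z * (v ^ m)⁻¹) z :=
    IsFreeGroup.commute_trans hconj_ne (Commute.self_zpow _ p) hconj_pow
  exact IsFreeGroup.commute_trans hvm (Commute.self_zpow v m)
    (IsFreeGroup.commute_of_commute_conj hconj)
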